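/- Let X = Σ_{j=1}^r λ_j^{1/2} P_j η_j be a Gaussian random element of a separable Hilbert space, where P_1, ..., P_r are i.i.d. standard normal random variables, (η_j) is orthonormal, and λ_j > 0. Then the variance operator of X ⊗ X satisfies var(X ⊗ X) = E[(X ⊗ X) ⊗₂ (X ⊗ X)] − K_X ⊗₂ K_X = 2 Σ_{j=1}^r λ_j² (ζ_{jj} ⊗₂ ζ_{jj}) + Σ_{1 ≤ j < j' ≤ r} λ_j λ_{j'} (ζ_{jj'} ⊗₂ ζ_{jj'} + ζ_{jj'} ⊗₂ ζ_{j'j} + ζ_{j'j} ⊗₂ ζ_{j'j} + ζ_{j'j} ⊗₂ ζ_{jj'}), where ζ_{jj'} = η_j ⊗ η_{j'} and K_X = Σ_j λ_j ζ_{jj}. -/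

import Mathlib

open scoped InnerProductSpace
open MeasureTheory ProbabilityTheory
noncomputable section

variable {H : Type*} [NormedAddCommGroup H] [InnerProductSpace ℝ H]

/-- The rank-one operator `u ⊗ v : w ↦ ⟨w, v⟩ u`. -/
def rankOne (u v : H) : H →L[ℝ] H := (innerSL ℝ v).smulRight u

/-- The Hilbert–Schmidt inner product computed in a Hilbert basis. -/
def hsInner {ι : Type*} (b : HilbertBasis ι ℝ H) (S T : H →L[ℝ] H) : ℝ :=
  ∑' i, ⟪S (b i), T (b i)⟫_ℝ

open Real Filter
open scoped ENNReal NNReal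

section MomentLemmas

lemma myInt (m : ℕ) : Integrable (fun x : ℝ => x ^ m * rexp (-2⁻¹ * x ^ 2)) := by
  have h := integrable_rpow_mul_exp_neg_mul_sq (b := 2⁻¹) (by norm_num)
    (s := (m : ℝ)) (by exact_mod_cast neg_one_lt_zero.trans_le (Nat.cast_nonneg m))
  simpa [Real.rpow_natCast] using h
lemma hasDerivAt_negexp (x : ℝ) :
    HasDerivAt (fun x : ℝ => -rexp (-2⁻¹ * x ^ 2)) (x * rexp (-2⁻¹ * x ^ 2)) x := by
  have h1 : HasDerivAt (fun x : ℝ => -2⁻¹ * x ^ 2) (-x) x := by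
    simpa using ((hasDerivAt_pow 2 x).const_mul (-2⁻¹ : ℝ))
  have h2 : HasDerivAt (fun x : ℝ => -rexp (-2⁻¹ * x ^ 2)) (-(rexp (-2⁻¹ * x ^ 2) * -x)) x :=
    (h1.exp).neg
  convert h2 using 1
  ring
lemma J_one : (∫ x : ℝ, x ^ 1 * rexp (-2⁻¹ * x ^ 2)) = 0 := by
  have hsq_top : Tendsto (fun x : ℝ => x ^ 2) atTop atTop :=
    tendsto_pow_atTop two_ne_zero
  have hsq_bot : Tendsto (fun x : ℝ => x ^ 2) atBot atTop := by
    have h := hsq_top.comp (tendsto_neg_atBot_atTop (G := ℝ))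
    simpa [Function.comp_def] using h
  have harg_top : Tendsto (fun x : ℝ => -2⁻¹ * x ^ 2) atTop atBot := by
    have h1 : Tendsto (fun x : ℝ => 2⁻¹ * x ^ 2) atTop atTop :=
      hsq_top.const_mul_atTop (by norm_num)
    have h := tendsto_neg_atTop_atBot.comp h1
    have e : (Neg.neg ∘ fun x : ℝ => 2⁻¹ * x ^ 2) = fun x : ℝ => -2⁻¹ * x ^ 2 := by
      funext x; simp only [Function.comp_apply]; ring
    rwa [e] at h
  have harg_bot : Tendsto (fun x : ℝ => -2⁻¹ * x ^ 2) atBot atBot := by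
    have h1 : Tendsto (fun x : ℝ => 2⁻¹ * x ^ 2) atBot atTop :=
      hsq_bot.const_mul_atTop (by norm_num)
    have h := tendsto_neg_atTop_atBot.comp h1
    have e : (Neg.neg ∘ fun x : ℝ => 2⁻¹ * x ^ 2) = fun x : ℝ => -2⁻¹ * x ^ 2 := by
      funext x; simp only [Function.comp_apply]; ring
    rwa [e] at h
  have h_top : Tendsto (fun x : ℝ => -rexp (-2⁻¹ * x ^ 2)) atTop (nhds 0) := by
    have h := (Real.tendsto_exp_atBot.comp harg_top).neg
    simpa [Function.comp_def] using h
  have h_bot : Tendsto (fun x : ℝ => -rexp (-2⁻¹ * x ^ 2)) atBot (nhds 0) := by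
    have h := (Real.tendsto_exp_atBot.comp harg_bot).neg
    simpa [Function.comp_def] using h
  have key := MeasureTheory.integral_of_hasDerivAt_of_tendsto
    (fun x => hasDerivAt_negexp x)
    (f' := fun x : ℝ => x * rexp (-2⁻¹ * x ^ 2))
    (by simpa [pow_one] using myInt 1) h_bot h_top
  simpa [pow_one] using key
lemma J_zero : (∫ x : ℝ, x ^ 0 * rexp (-2⁻¹ * x ^ 2)) = Real.sqrt (2 * π) := by
  simp only [pow_zero, one_mul]
  rw [integral_gaussian (2⁻¹ : ℝ), show (π / 2⁻¹) = 2 * π by ring]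

lemma J_rec (m : ℕ) : (∫ x : ℝ, x ^ (m + 2) * rexp (-2⁻¹ * x ^ 2)) =
    (m + 1 : ℝ) * ∫ x : ℝ, x ^ m * rexp (-2⁻¹ * x ^ 2) := by
  have hu : ∀ x : ℝ, HasDerivAt (fun x : ℝ => x ^ (m + 1)) ((m + 1 : ℝ) * x ^ m) x := by
    intro x; simpa using hasDerivAt_pow (m + 1) x
  have hv := hasDerivAt_negexp
  have key := MeasureTheory.integral_mul_deriv_eq_deriv_mul_of_integrable (fun x _ => hu x) (fun x _ => hv x)
    (u := fun x : ℝ => x ^ (m + 1)) (v := fun x : ℝ => -rexp (-2⁻¹ * x ^ 2))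
    (huv' := by
      have : (fun x : ℝ => x ^ (m + 1)) * (fun x : ℝ => x * rexp (-2⁻¹ * x ^ 2)) =
          fun x : ℝ => x ^ (m + 2) * rexp (-2⁻¹ * x ^ 2) := by funext x; simp only [Pi.mul_apply]; ring
      rw [this]; exact myInt (m + 2))
    (hu'v := by
      have : (fun x : ℝ => (m + 1 : ℝ) * x ^ m) * (fun x : ℝ => -rexp (-2⁻¹ * x ^ 2)) =
          fun x : ℝ => (-(m + 1) : ℝ) * (x ^ m * rexp (-2⁻¹ * x ^ 2)) := by
        funext x; simp only [Pi.mul_apply]; ring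
      rw [this]; exact (myInt m).const_mul _)
    (huv := by
      have : (fun x : ℝ => x ^ (m + 1)) * (fun x : ℝ => -rexp (-2⁻¹ * x ^ 2)) =
          fun x : ℝ => (-1 : ℝ) * (x ^ (m + 1) * rexp (-2⁻¹ * x ^ 2)) := by
        funext x; simp only [Pi.mul_apply]; ring
      rw [this]; exact (myInt (m + 1)).const_mul _)
  have l1 : (∫ x : ℝ, x ^ (m + 1) * (x * rexp (-2⁻¹ * x ^ 2))) =
      ∫ x : ℝ, x ^ (m + 2) * rexp (-2⁻¹ * x ^ 2) := by
    congr 1; funext x; ring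
  rw [l1] at key
  rw [key]
  rw [← integral_neg]
  rw [show (fun x : ℝ => -((m + 1 : ℝ) * x ^ m * -rexp (-2⁻¹ * x ^ 2))) =
      fun x : ℝ => (m + 1 : ℝ) * (x ^ m * rexp (-2⁻¹ * x ^ 2)) by funext x; ring]
  rw [MeasureTheory.integral_const_mul]


lemma J_two : (∫ x : ℝ, x ^ 2 * rexp (-2⁻¹ * x ^ 2)) = Real.sqrt (2 * π) := by
  have h := J_rec 0
  rw [J_zero] at h
  simpa using h

lemma J_three : (∫ x : ℝ, x ^ 3 * rexp (-2⁻¹ * x ^ 2)) = 0 := by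
  have h := J_rec 1
  rw [J_one] at h
  simpa using h

lemma J_four : (∫ x : ℝ, x ^ 4 * rexp (-2⁻¹ * x ^ 2)) = 3 * Real.sqrt (2 * π) := by
  have h := J_rec 2
  rw [J_two] at h
  norm_num at h
  rw [Real.sqrt_mul (by norm_num : (0:ℝ) ≤ 2)]
  convert h using 2
  norm_num

lemma pdf01 (x : ℝ) : gaussianPDFReal 0 1 x = (Real.sqrt (2 * π))⁻¹ * rexp (-2⁻¹ * x ^ 2) := by
  simp only [gaussianPDFReal, NNReal.coe_one, mul_one, sub_zero]
  ring_nf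

lemma gaussMoment (m : ℕ) : (∫ x, x ^ m ∂(gaussianReal 0 1)) =
    (Real.sqrt (2 * π))⁻¹ * ∫ x : ℝ, x ^ m * rexp (-2⁻¹ * x ^ 2) := by
  rw [gaussianReal_of_var_ne_zero 0 one_ne_zero]
  have h1 : (volume.withDensity (gaussianPDF 0 1)) =
      volume.withDensity (fun x => ((gaussianPDFReal 0 1 x).toNNReal : ℝ≥0∞)) := rfl
  rw [h1, integral_withDensity_eq_integral_smul
    (measurable_gaussianPDFReal 0 1).real_toNNReal (fun x => x ^ m)]
  rw [← MeasureTheory.integral_const_mul]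
  congr 1
  funext x
  rw [NNReal.smul_def, smul_eq_mul, Real.coe_toNNReal _ (gaussianPDFReal_nonneg _ _ _), pdf01]
  ring

lemma gaussIntegrable (m : ℕ) : Integrable (fun x : ℝ => x ^ m) (gaussianReal 0 1) := by
  rw [gaussianReal_of_var_ne_zero 0 one_ne_zero,
    integrable_withDensity_iff (measurable_gaussianPDF 0 1)
      (ae_of_all _ fun x => ENNReal.ofReal_lt_top)]
  apply (((myInt m).const_mul ((Real.sqrt (2 * π))⁻¹)).congr)
  apply ae_of_all
  intro x
  simp only [gaussianPDF]
  rw [ENNReal.toReal_ofReal (gaussianPDFReal_nonneg _ _ _), pdf01]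
  ring

lemma sqrt2pi_ne : Real.sqrt (2 * π) ≠ 0 := by positivity

lemma M0 : (∫ x, x ^ 0 ∂(gaussianReal 0 1)) = 1 := by simp
lemma M1 : (∫ x, x ^ 1 ∂(gaussianReal 0 1)) = 0 := by rw [gaussMoment, J_one]; ring
lemma M2 : (∫ x, x ^ 2 ∂(gaussianReal 0 1)) = 1 := by
  rw [gaussMoment, J_two, inv_mul_cancel₀ sqrt2pi_ne]
lemma M3 : (∫ x, x ^ 3 ∂(gaussianReal 0 1)) = 0 := by rw [gaussMoment, J_three]; ring
lemma M4 : (∫ x, x ^ 4 ∂(gaussianReal 0 1)) = 3 := by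
  rw [gaussMoment, J_four]
  field_simp

section Prob
variable {Ω : Type*} [MeasurableSpace Ω] {μ : Measure Ω} [IsProbabilityMeasure μ]

lemma indep_prod {r : ℕ} {Q : Fin r → Ω → ℝ}
    (hind : iIndepFun Q μ) (hm : ∀ i, Measurable (Q i))
    (hint : ∀ i, Integrable (Q i) μ) (s : Finset (Fin r)) :
    Integrable (fun ω => ∏ i ∈ s, Q i ω) μ ∧
      (∫ ω, ∏ i ∈ s, Q i ω ∂μ) = ∏ i ∈ s, ∫ ω, Q i ω ∂μ := by
  classical
  induction s using Finset.cons_induction with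
  | empty => simp
  | cons a s ha ih =>
    have hfin : IndepFun (∏ j ∈ s, Q j) (Q a) μ :=
      hind.indepFun_finsetProd_of_notMem hm ha
    have hps : (∏ j ∈ s, Q j) = fun ω => ∏ j ∈ s, Q j ω := by
      funext ω; simp
    have hint1 : Integrable (∏ j ∈ s, Q j) μ := by rw [hps]; exact ih.1
    have hmul : Integrable ((∏ j ∈ s, Q j) * Q a) μ :=
      hfin.integrable_mul hint1 (hint a)
    have hintegral := hfin.integral_mul_eq_mul_integral hint1.aestronglyMeasurable (hint a).aestronglyMeasurable
    constructor
    · have : (fun ω => ∏ i ∈ Finset.cons a s ha, Q i ω) = (∏ j ∈ s, Q j) * Q a := by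
        funext ω; rw [Finset.prod_cons]; simp [mul_comm]
      rw [this]; exact hmul
    · rw [Finset.prod_cons, show (fun ω => ∏ i ∈ Finset.cons a s ha, Q i ω) =
        (∏ j ∈ s, Q j) * Q a by funext ω; rw [Finset.prod_cons]; simp [mul_comm]]
      rw [hintegral, hps, ih.2]
      ring

lemma moment_prod {r : ℕ} {P : Fin r → Ω → ℝ} (hmeas : ∀ j, Measurable (P j))
    (hindep : iIndepFun P μ)
    (hgauss : ∀ j, Measure.map (P j) μ = gaussianReal 0 1) (m : Fin r → ℕ) :
    Integrable (fun ω => ∏ i, P i ω ^ m i) μ ∧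
      (∫ ω, ∏ i, P i ω ^ m i ∂μ) = ∏ i, ∫ x, x ^ m i ∂(gaussianReal 0 1) := by
  set Q : Fin r → Ω → ℝ := fun i ω => P i ω ^ m i with hQ
  have hQind : iIndepFun Q μ :=
    hindep.comp (fun i x => x ^ m i) (fun i => measurable_id.pow_const (m i))
  have hQm : ∀ i, Measurable (Q i) := fun i => (hmeas i).pow_const (m i)
  have key : ∀ i, Integrable (Q i) μ ∧ (∫ ω, Q i ω ∂μ) = ∫ x, x ^ m i ∂(gaussianReal 0 1) := by
    intro i
    have hsm : AEStronglyMeasurable (fun x : ℝ => x ^ m i) (Measure.map (P i) μ) :=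
      (measurable_id.pow_const (m i)).aestronglyMeasurable
    constructor
    · have h1 := (integrable_map_measure hsm (hmeas i).aemeasurable).mp
      apply h1
      rw [hgauss i]
      exact gaussIntegrable (m i)
    · have h2 := integral_map (hmeas i).aemeasurable hsm
      rw [hgauss i] at h2
      exact h2.symm
  have h := indep_prod hQind hQm (fun i => (key i).1) Finset.univ
  exact ⟨h.1, by rw [h.2]; exact Finset.prod_congr rfl fun i _ => (key i).2⟩

def Mg : ℕ → ℝ := fun t => ∫ x, x ^ t ∂(gaussianReal 0 1)
lemma Mg0 : Mg 0 = 1 := M0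
lemma Mg1 : Mg 1 = 0 := M1
lemma Mg2 : Mg 2 = 1 := M2
lemma Mg3 : Mg 3 = 0 := M3
lemma Mg4 : Mg 4 = 3 := M4
lemma Modd' (t : ℕ) (ht : t = 1 ∨ t = 3) : Mg t = 0 := by
  rcases ht with h | h <;> rw [h]
  · exact Mg1
  · exact Mg3

lemma prod_eval1 {r : ℕ} (Mf : ℕ → ℝ) (hMf0 : Mf 0 = 1) (m : Fin r → ℕ) (c : Fin r)
    (h : ∀ i, i ≠ c → m i = 0) : ∏ i, Mf (m i) = Mf (m c) := by
  classical
  rw [← Finset.prod_subset (Finset.subset_univ {c})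
    (fun i _ hi => by rw [h i (by simpa using hi), hMf0])]
  simp

lemma prod_eval2 {r : ℕ} (Mf : ℕ → ℝ) (hMf0 : Mf 0 = 1) (m : Fin r → ℕ) (c d : Fin r)
    (hcd : c ≠ d) (h : ∀ i, i ≠ c → i ≠ d → m i = 0) :
    ∏ i, Mf (m i) = Mf (m c) * Mf (m d) := by
  classical
  rw [← Finset.prod_subset (Finset.subset_univ {c, d})
    (fun i _ hi => by
      simp only [Finset.mem_insert, Finset.mem_singleton, not_or] at hi
      rw [h i hi.1 hi.2, hMf0])]
  rw [Finset.prod_pair hcd]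

lemma E4 {r : ℕ} {P : Fin r → Ω → ℝ} (hmeas : ∀ j, Measurable (P j))
    (hindep : iIndepFun P μ)
    (hgauss : ∀ j, Measure.map (P j) μ = gaussianReal 0 1) (a b j k : Fin r) :
    Integrable (fun ω => P a ω * P b ω * P j ω * P k ω) μ ∧
    (∫ ω, P a ω * P b ω * P j ω * P k ω ∂μ) =
      (if a = b then (1:ℝ) else 0) * (if j = k then 1 else 0)
      + (if a = j then 1 else 0) * (if b = k then 1 else 0)
      + (if a = k then 1 else 0) * (if b = j then 1 else 0) := by
  classical
  have hrepr : (fun ω => P a ω * P b ω * P j ω * P k ω) = fun ω => ∏ i,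
      P i ω ^ ((if a = i then 1 else 0) + (if b = i then 1 else 0)
        + (if j = i then 1 else 0) + (if k = i then 1 else 0)) := by
    funext ω
    have h1 : ∀ c : Fin r, (∏ i, P i ω ^ (if c = i then 1 else 0)) = P c ω := by
      intro c
      rw [Finset.prod_congr rfl (fun i _ => show P i ω ^ (if c = i then 1 else 0)
        = (if c = i then P i ω else 1) from by by_cases h : c = i <;> simp [h])]
      simp
    simp only [pow_add]
    rw [Finset.prod_mul_distrib, Finset.prod_mul_distrib, Finset.prod_mul_distrib,
      h1 a, h1 b, h1 j, h1 k]
  have hmp := moment_prod hmeas hindep hgauss (fun i => (if a = i then 1 else 0)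
    + (if b = i then 1 else 0) + (if j = i then 1 else 0) + (if k = i then 1 else 0))
  refine ⟨by rw [hrepr]; exact hmp.1, ?_⟩
  rw [hrepr, hmp.2]
  have ns : ∀ {x y : Fin r}, ¬x = y → ¬y = x := fun h he => h he.symm
  show (∏ i, Mg ((if a = i then 1 else 0) + (if b = i then 1 else 0)
      + (if j = i then 1 else 0) + (if k = i then 1 else 0))) = _
  by_cases hab : a = b
  · subst hab
    by_cases hjk : j = k
    · subst hjk
      by_cases haj : a = j
      · subst haj
        rw [prod_eval1 Mg Mg0 _ a (fun i hi => by simp [ns hi])]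
        norm_num [Mg4]
      · rw [prod_eval2 Mg Mg0 _ a j haj (fun i h1 h2 => by simp [ns h1, ns h2])]
        norm_num [Mg2, haj, ns haj]
    · by_cases haj : a = j
      · subst haj
        rw [Finset.prod_eq_zero (Finset.mem_univ k)
          (Modd' _ (by norm_num [hjk, ns hjk]))]
        norm_num [hjk, ns hjk]
      · by_cases hak : a = k
        · subst hak
          rw [Finset.prod_eq_zero (Finset.mem_univ j)
            (Modd' _ (by norm_num [hjk, ns hjk, haj, ns haj]))]
          norm_num [hjk, ns hjk, haj, ns haj]
        · rw [Finset.prod_eq_zero (Finset.mem_univ j)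
            (Modd' _ (by norm_num [hjk, ns hjk, haj, ns haj, hak, ns hak]))]
          norm_num [hjk, ns hjk, haj, ns haj, hak, ns hak]
  · by_cases hjk : j = k
    · subst hjk
      by_cases haj : a = j
      · subst haj
        rw [Finset.prod_eq_zero (Finset.mem_univ b)
          (Modd' _ (by norm_num [hab, ns hab]))]
        norm_num [hab, ns hab]
      · by_cases hbj : b = j
        · subst hbj
          rw [Finset.prod_eq_zero (Finset.mem_univ a)
            (Modd' _ (by norm_num [hab, ns hab, haj, ns haj]))]
          norm_num [hab, ns hab, haj, ns haj]
        · rw [Finset.prod_eq_zero (Finset.mem_univ a)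
            (Modd' _ (by norm_num [hab, ns hab, haj, ns haj, hbj, ns hbj]))]
          norm_num [hab, ns hab, haj, ns haj, hbj, ns hbj]
    · by_cases haj : a = j
      · subst haj
        by_cases hbk : b = k
        · subst hbk
          rw [prod_eval2 Mg Mg0 _ a b hab (fun i h1 h2 => by simp [ns h1, ns h2])]
          norm_num [Mg2, hab, ns hab, hjk, ns hjk]
        · rw [Finset.prod_eq_zero (Finset.mem_univ k)
            (Modd' _ (by norm_num [hab, ns hab, hjk, ns hjk, hbk, ns hbk]))]
          norm_num [hab, ns hab, hjk, ns hjk, hbk, ns hbk]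
      · by_cases hak : a = k
        · subst hak
          by_cases hbj : b = j
          · subst hbj
            rw [prod_eval2 Mg Mg0 _ a b hab (fun i h1 h2 => by simp [ns h1, ns h2])]
            norm_num [Mg2, hab, ns hab, hjk, ns hjk, haj, ns haj]
          · rw [Finset.prod_eq_zero (Finset.mem_univ j)
              (Modd' _ (by norm_num [hab, ns hab, hjk, ns hjk, haj, ns haj, hbj, ns hbj]))]
            norm_num [hab, ns hab, hjk, ns hjk, haj, ns haj, hbj, ns hbj]
        · by_cases hbj : b = j
          · subst hbj
            rw [Finset.prod_eq_zero (Finset.mem_univ a)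
              (Modd' _ (by norm_num [hab, ns hab, hjk, ns hjk, haj, ns haj, hak, ns hak]))]
            norm_num [hab, ns hab, hjk, ns hjk, haj, ns haj, hak, ns hak]
          · by_cases hbk : b = k
            · subst hbk
              rw [Finset.prod_eq_zero (Finset.mem_univ a)
                (Modd' _ (by norm_num [hab, ns hab, hjk, ns hjk, haj, ns haj, hak, ns hak, hbj, ns hbj]))]
              norm_num [hab, ns hab, hjk, ns hjk, haj, ns haj, hak, ns hak, hbj, ns hbj]
            · rw [Finset.prod_eq_zero (Finset.mem_univ a)
                (Modd' _ (by norm_num [hab, ns hab, hjk, ns hjk, haj, ns haj, hak, ns hak, hbj, ns hbj, hbk, ns hbk]))]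
              norm_num [hab, ns hab, hjk, ns hjk, haj, ns haj, hak, ns hak, hbj, ns hbj, hbk, ns hbk]

end Prob
end MomentLemmas

section HilbertLemmas
lemma rankOne_apply (u v w : H) : rankOne u v w = ⟪v, w⟫_ℝ • u := rfl

variable [CompleteSpace H] {ι : Type*} (b : HilbertBasis ι ℝ H) (T : H →L[ℝ] H)

lemma hs_term_eq (u v : H) (i : ι) :
    ⟪T (b i), (rankOne u v) (b i)⟫_ℝ =
      ⟪v, b i⟫_ℝ * ⟪b i, (ContinuousLinearMap.adjoint T) u⟫_ℝ := by
  rw [rankOne_apply, real_inner_smul_right, ContinuousLinearMap.adjoint_inner_right]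

lemma hs_summable (u v : H) :
    Summable (fun i => ⟪T (b i), (rankOne u v) (b i)⟫_ℝ) := by
  have h := b.summable_inner_mul_inner v ((ContinuousLinearMap.adjoint T) u)
  apply h.congr
  intro i
  rw [hs_term_eq]

lemma hsInner_sum {γ : Type*} (s : Finset γ) (c : γ → ℝ) (u v : γ → H) :
    hsInner b T (∑ x ∈ s, c x • rankOne (u x) (v x)) =
      ∑ x ∈ s, c x * hsInner b T (rankOne (u x) (v x)) := by
  unfold hsInner
  have h1 : ∀ i : ι, ⟪T (b i), (∑ x ∈ s, c x • rankOne (u x) (v x)) (b i)⟫_ℝ =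
      ∑ x ∈ s, c x * ⟪T (b i), (rankOne (u x) (v x)) (b i)⟫_ℝ := by
    intro i
    rw [ContinuousLinearMap.sum_apply, inner_sum]
    exact Finset.sum_congr rfl fun x _ => by
      rw [ContinuousLinearMap.smul_apply, real_inner_smul_right]
  rw [tsum_congr h1, Summable.tsum_finsetSum (fun x _ => (hs_summable b T (u x) (v x)).mul_left (c x))]
  exact Finset.sum_congr rfl fun x _ => tsum_mul_left

lemma rankOne_sum_sum {γ δ : Type*} (s : Finset γ) (t : Finset δ)
    (c : γ → ℝ) (d : δ → ℝ) (u : γ → H) (v : δ → H) :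
    rankOne (∑ x ∈ s, c x • u x) (∑ y ∈ t, d y • v y) =
      ∑ x ∈ s, ∑ y ∈ t, (c x * d y) • rankOne (u x) (v y) := by
  ext w
  simp only [rankOne_apply, ContinuousLinearMap.sum_apply, ContinuousLinearMap.smul_apply,
    rankOne_apply, sum_inner, real_inner_smul_left, Finset.sum_smul, Finset.smul_sum,
    smul_smul]
  refine Finset.sum_congr rfl fun x _ => ?_
  rw [Finset.sum_mul, Finset.sum_smul]
  refine Finset.sum_congr rfl fun y _ => ?_
  congr 1
  ring

lemma sum_split {n : ℕ} {V : Type*} [AddCommGroup V] (A : Fin n → Fin n → V) :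
    (∑ j, ∑ k, A j k) = (∑ j, A j j) +
      ∑ j, ∑ k, (if j < k then A j k + A k j else 0) := by
  classical
  have key : (∑ j, ∑ k, A j k) =
      (∑ j, ∑ k, ((if j = k then A j k else 0) + (if j < k then A j k else 0)
        + (if k < j then A j k else 0))) := by
    refine Finset.sum_congr rfl fun j _ => Finset.sum_congr rfl fun k _ => ?_
    rcases lt_trichotomy j k with h | h | h
    · simp [h, ne_of_lt h, lt_asymm h]
    · simp [h, lt_irrefl]
    · simp [h, (ne_of_lt h).symm, lt_asymm h]
  rw [key]
  simp only [Finset.sum_add_distrib]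
  have e1 : (∑ j, ∑ k, if j = k then A j k else 0) = ∑ j : Fin n, A j j :=
    Finset.sum_congr rfl fun j _ => by simp
  have e2 : (∑ j, ∑ k, if k < j then A j k else 0) =
      ∑ j, ∑ k, if j < k then A k j else 0 := Finset.sum_comm
  rw [e1, e2, add_assoc]
  congr 1
  rw [← Finset.sum_add_distrib]
  refine Finset.sum_congr rfl fun j _ => ?_
  rw [← Finset.sum_add_distrib]
  refine Finset.sum_congr rfl fun k _ => ?_
  split <;> simp

lemma sum_ite_const {α V : Type*} [AddCommMonoid V] {c : Prop} [Decidable c]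
    (f : α → V) (s : Finset α) :
    (∑ x ∈ s, if c then f x else 0) = if c then ∑ x ∈ s, f x else 0 := by
  split <;> simp

lemma scal_split {V : Type*} [AddCommGroup V] [Module ℝ V] (x : ℝ) (v : V)
    (c1 c2 c3 c4 c5 c6 : Prop) [Decidable c1] [Decidable c2] [Decidable c3] [Decidable c4]
    [Decidable c5] [Decidable c6] :
    (x * ((if c1 then (1:ℝ) else 0) * (if c2 then 1 else 0)
      + (if c3 then 1 else 0) * (if c4 then 1 else 0)
      + (if c5 then 1 else 0) * (if c6 then 1 else 0))) • v
    = ((if c2 then (if c1 then x • v else 0) else 0)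
      + (if c4 then (if c3 then x • v else 0) else 0))
      + (if c6 then (if c5 then x • v else 0) else 0) := by
  by_cases h1 : c1 <;> by_cases h2 : c2 <;> by_cases h3 : c3 <;> by_cases h4 : c4 <;>
    by_cases h5 : c5 <;> by_cases h6 : c6 <;>
    simp [h1, h2, h3, h4, h5, h6, add_smul, mul_smul, one_smul, mul_one, mul_zero,
      add_zero, zero_add, mul_comm] <;> module

lemma final_algebra {r : ℕ} (lam : Fin r → ℝ) (hlam : ∀ j, 0 ≤ lam j)
    (F : Fin r → Fin r → ℝ) (Z : Fin r → Fin r → (H →L[ℝ] H)) :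
    (∑ q1, ∑ q2, ∑ p1, ∑ p2,
      ((Real.sqrt (lam q1) * Real.sqrt (lam q2) * Real.sqrt (lam p1) * Real.sqrt (lam p2)
          * F q1 q2) *
        ((if q1 = q2 then (1:ℝ) else 0) * (if p1 = p2 then 1 else 0)
          + (if q1 = p1 then 1 else 0) * (if q2 = p2 then 1 else 0)
          + (if q1 = p2 then 1 else 0) * (if q2 = p1 then 1 else 0))) • Z p1 p2)
      - (∑ j, ∑ k, ((lam j * lam k) * F j j) • Z k k) =
    (2:ℝ) • (∑ j, ((lam j)^2 * F j j) • Z j j)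
      + ∑ j, ∑ k, (if j < k then (lam j * lam k) •
          (F j k • Z j k + F k j • Z j k + F k j • Z k j + F j k • Z k j) else 0) := by
  have hss : ∀ a, Real.sqrt (lam a) * Real.sqrt (lam a) = lam a :=
    fun a => Real.mul_self_sqrt (hlam a)
  have step1 : (∑ q1, ∑ q2, ∑ p1, ∑ p2,
      ((Real.sqrt (lam q1) * Real.sqrt (lam q2) * Real.sqrt (lam p1) * Real.sqrt (lam p2)
          * F q1 q2) *
        ((if q1 = q2 then (1:ℝ) else 0) * (if p1 = p2 then 1 else 0)
          + (if q1 = p1 then 1 else 0) * (if q2 = p2 then 1 else 0)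
          + (if q1 = p2 then 1 else 0) * (if q2 = p1 then 1 else 0))) • Z p1 p2) =
      (∑ j, ∑ k, ((lam j * lam k) * F j j) • Z k k)
      + (∑ j, ∑ k, ((lam j * lam k) * F j k) • Z j k)
      + (∑ j, ∑ k, ((lam j * lam k) * F j k) • Z k j) := by
    have hterm : ∀ q1 q2 p1 p2 : Fin r,
        ((Real.sqrt (lam q1) * Real.sqrt (lam q2) * Real.sqrt (lam p1) * Real.sqrt (lam p2)
            * F q1 q2) *
          ((if q1 = q2 then (1:ℝ) else 0) * (if p1 = p2 then 1 else 0)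
            + (if q1 = p1 then 1 else 0) * (if q2 = p2 then 1 else 0)
            + (if q1 = p2 then 1 else 0) * (if q2 = p1 then 1 else 0))) • Z p1 p2
        = ((if p1 = p2 then (if q1 = q2 then
              (Real.sqrt (lam q1) * Real.sqrt (lam q2) * Real.sqrt (lam p1)
                * Real.sqrt (lam p2) * F q1 q2) • Z p1 p2 else 0) else 0)
          + (if q2 = p2 then (if q1 = p1 then
              (Real.sqrt (lam q1) * Real.sqrt (lam q2) * Real.sqrt (lam p1)
                * Real.sqrt (lam p2) * F q1 q2) • Z p1 p2 else 0) else 0))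
          + (if q2 = p1 then (if q1 = p2 then
              (Real.sqrt (lam q1) * Real.sqrt (lam q2) * Real.sqrt (lam p1)
                * Real.sqrt (lam p2) * F q1 q2) • Z p1 p2 else 0) else 0) :=
      fun q1 q2 p1 p2 => scal_split _ _ _ _ _ _ _ _
    rw [Finset.sum_congr rfl fun q1 _ => Finset.sum_congr rfl fun q2 _ =>
      Finset.sum_congr rfl fun p1 _ => Finset.sum_congr rfl fun p2 _ => hterm q1 q2 p1 p2]
    simp only [Finset.sum_add_distrib]
    congr 1
    · congr 1
      · -- S1
        refine Finset.sum_congr rfl fun q1 _ => ?_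
        rw [show (∑ q2, ∑ p1, ∑ p2, if p1 = p2 then (if q1 = q2 then
            (Real.sqrt (lam q1) * Real.sqrt (lam q2) * Real.sqrt (lam p1)
              * Real.sqrt (lam p2) * F q1 q2) • Z p1 p2 else 0) else 0) =
          ∑ q2, if q1 = q2 then (∑ p1, (Real.sqrt (lam q1) * Real.sqrt (lam q2)
            * Real.sqrt (lam p1) * Real.sqrt (lam p1) * F q1 q2) • Z p1 p1) else 0 from
          Finset.sum_congr rfl fun q2 _ => by
            rw [Finset.sum_congr rfl fun p1 _ => Finset.sum_ite_eq Finset.univ p1 _]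
            simp only [Finset.mem_univ, if_true]
            rw [sum_ite_const]]
        rw [Finset.sum_ite_eq Finset.univ q1 _]
        simp only [Finset.mem_univ, if_true]
        refine Finset.sum_congr rfl fun p1 _ => ?_
        congr 1
        rw [show Real.sqrt (lam q1) * Real.sqrt (lam q1) * Real.sqrt (lam p1)
            * Real.sqrt (lam p1) * F q1 q1 =
          ((Real.sqrt (lam q1) * Real.sqrt (lam q1)) * (Real.sqrt (lam p1)
            * Real.sqrt (lam p1))) * F q1 q1 from by ring, hss, hss]
      · -- S2
        refine Finset.sum_congr rfl fun q1 _ => Finset.sum_congr rfl fun q2 _ => ?_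
        rw [show (∑ p1, ∑ p2, if q2 = p2 then (if q1 = p1 then
            (Real.sqrt (lam q1) * Real.sqrt (lam q2) * Real.sqrt (lam p1)
              * Real.sqrt (lam p2) * F q1 q2) • Z p1 p2 else 0) else 0) =
          ∑ p1, if q1 = p1 then (Real.sqrt (lam q1) * Real.sqrt (lam q2)
            * Real.sqrt (lam p1) * Real.sqrt (lam q2) * F q1 q2) • Z p1 q2 else 0 from
          Finset.sum_congr rfl fun p1 _ => by
            rw [Finset.sum_ite_eq Finset.univ q2 _]
            simp only [Finset.mem_univ, if_true]]
        rw [Finset.sum_ite_eq Finset.univ q1 _]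
        simp only [Finset.mem_univ, if_true]
        congr 1
        rw [show Real.sqrt (lam q1) * Real.sqrt (lam q2) * Real.sqrt (lam q1)
            * Real.sqrt (lam q2) * F q1 q2 =
          ((Real.sqrt (lam q1) * Real.sqrt (lam q1)) * (Real.sqrt (lam q2)
            * Real.sqrt (lam q2))) * F q1 q2 from by ring, hss, hss]
    · -- S3
      refine Finset.sum_congr rfl fun q1 _ => Finset.sum_congr rfl fun q2 _ => ?_
      rw [show (∑ p1, ∑ p2, if q2 = p1 then (if q1 = p2 then
          (Real.sqrt (lam q1) * Real.sqrt (lam q2) * Real.sqrt (lam p1)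
            * Real.sqrt (lam p2) * F q1 q2) • Z p1 p2 else 0) else 0) =
        ∑ p1, if q2 = p1 then (Real.sqrt (lam q1) * Real.sqrt (lam q2)
          * Real.sqrt (lam p1) * Real.sqrt (lam q1) * F q1 q2) • Z p1 q1 else 0 from
        Finset.sum_congr rfl fun p1 _ => by
          rw [sum_ite_const, Finset.sum_ite_eq Finset.univ q1 _]
          simp only [Finset.mem_univ, if_true]]
      rw [Finset.sum_ite_eq Finset.univ q2 _]
      simp only [Finset.mem_univ, if_true]
      congr 1
      rw [show Real.sqrt (lam q1) * Real.sqrt (lam q2) * Real.sqrt (lam q2)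
          * Real.sqrt (lam q1) * F q1 q2 =
        ((Real.sqrt (lam q1) * Real.sqrt (lam q1)) * (Real.sqrt (lam q2)
          * Real.sqrt (lam q2))) * F q1 q2 from by ring, hss, hss]
  rw [step1]
  rw [show ∀ a b c : H →L[ℝ] H, a + b + c - a = b + c from fun a b c => by abel]
  rw [← Finset.sum_add_distrib]
  rw [Finset.sum_congr rfl fun j _ => (Finset.sum_add_distrib).symm]
  rw [sum_split (fun j k => ((lam j * lam k) * F j k) • Z j k
    + ((lam j * lam k) * F j k) • Z k j)]
  congr 1
  · rw [Finset.smul_sum]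
    refine Finset.sum_congr rfl fun j _ => ?_
    rw [two_smul]
    module
  · refine Finset.sum_congr rfl fun j _ => Finset.sum_congr rfl fun k _ => ?_
    split
    · module
    · rfl

end HilbertLemmas

/-- For Gaussian `X = Σ_j √λ_j P_j η_j` with `P_j` i.i.d. standard normal, the variance
operator `var(X ⊗ X) = E[(X ⊗ X) ⊗₂ (X ⊗ X)] − K_X ⊗₂ K_X` equals
`2 Σ_j λ_j² ζ_jj ⊗₂ ζ_jj + Σ_{j<j'} λ_j λ_{j'} (ζ_{jj'} ⊗₂ ζ_{jj'} + ζ_{jj'} ⊗₂ ζ_{j'j} +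
ζ_{j'j} ⊗₂ ζ_{j'j} + ζ_{j'j} ⊗₂ ζ_{jj'})`, tested on an arbitrary operator `T`
(using `(A ⊗₂ B) T = ⟨T, B⟩_HS A`). -/
theorem stmt12 [CompleteSpace H] [TopologicalSpace.SeparableSpace H]
    {Ω : Type*} [MeasurableSpace Ω] (μ : Measure Ω) [IsProbabilityMeasure μ]
    {ι : Type*} (b : HilbertBasis ι ℝ H)
    (r : ℕ) (η : Fin r → H) (hη : Orthonormal ℝ η)
    (lam : Fin r → ℝ) (hlam : ∀ j, 0 < lam j)
    (P : Fin r → Ω → ℝ) (hmeas : ∀ j, Measurable (P j))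
    (hindep : iIndepFun P μ)
    (hgauss : ∀ j, Measure.map (P j) μ = gaussianReal 0 1)
    (X : Ω → H) (hX : ∀ ω, X ω = ∑ j, (Real.sqrt (lam j) * P j ω) • η j)
    (T : H →L[ℝ] H) :
    (∫ ω, hsInner b T (rankOne (X ω) (X ω)) • rankOne (X ω) (X ω) ∂μ) -
        hsInner b T (∑ j, lam j • rankOne (η j) (η j)) • (∑ j, lam j • rankOne (η j) (η j)) =
      (2 : ℝ) • (∑ j, ((lam j) ^ 2 * hsInner b T (rankOne (η j) (η j))) • rankOne (η j) (η j)) +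
        ∑ j, ∑ j', if j < j' then
          (lam j * lam j') •
            ((hsInner b T (rankOne (η j) (η j'))) • rankOne (η j) (η j') +
              (hsInner b T (rankOne (η j') (η j))) • rankOne (η j) (η j') +
              (hsInner b T (rankOne (η j') (η j))) • rankOne (η j') (η j) +
              (hsInner b T (rankOne (η j) (η j'))) • rankOne (η j') (η j))
          else 0 := by
  classical
  have hXrk : ∀ ω, rankOne (X ω) (X ω) =
      ∑ p : Fin r × Fin r, ((Real.sqrt (lam p.1) * P p.1 ω) * (Real.sqrt (lam p.2) * P p.2 ω)) •
        rankOne (η p.1) (η p.2) := by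
    intro ω
    rw [hX ω, rankOne_sum_sum]
    exact (Fintype.sum_prod_type (f := fun p : Fin r × Fin r =>
      ((Real.sqrt (lam p.1) * P p.1 ω) * (Real.sqrt (lam p.2) * P p.2 ω)) •
        rankOne (η p.1) (η p.2))).symm
  have hhs : ∀ ω, hsInner b T (rankOne (X ω) (X ω)) =
      ∑ q : Fin r × Fin r, ((Real.sqrt (lam q.1) * P q.1 ω) * (Real.sqrt (lam q.2) * P q.2 ω)) *
        hsInner b T (rankOne (η q.1) (η q.2)) := by
    intro ω
    rw [hXrk ω]
    exact hsInner_sum b T Finset.univ _ (fun q : Fin r × Fin r => η q.1)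
      (fun q : Fin r × Fin r => η q.2)
  have integrand_eq : ∀ ω, hsInner b T (rankOne (X ω) (X ω)) • rankOne (X ω) (X ω) =
      ∑ q : Fin r × Fin r, ∑ p : Fin r × Fin r,
        ((Real.sqrt (lam q.1) * Real.sqrt (lam q.2) * Real.sqrt (lam p.1) * Real.sqrt (lam p.2)
          * hsInner b T (rankOne (η q.1) (η q.2))) *
          (P q.1 ω * P q.2 ω * P p.1 ω * P p.2 ω)) • rankOne (η p.1) (η p.2) := by
    intro ω
    rw [hhs ω, hXrk ω, Finset.sum_smul]
    refine Finset.sum_congr rfl fun q _ => ?_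
    rw [Finset.smul_sum]
    refine Finset.sum_congr rfl fun p _ => ?_
    rw [smul_smul]
    congr 1
    ring
  have hint : ∀ q p : Fin r × Fin r, Integrable (fun ω =>
      ((Real.sqrt (lam q.1) * Real.sqrt (lam q.2) * Real.sqrt (lam p.1) * Real.sqrt (lam p.2)
        * hsInner b T (rankOne (η q.1) (η q.2))) *
        (P q.1 ω * P q.2 ω * P p.1 ω * P p.2 ω)) • rankOne (η p.1) (η p.2)) μ :=
    fun q p => ((E4 hmeas hindep hgauss q.1 q.2 p.1 p.2).1.const_mul _).smul_const _
  have hI : (∫ ω, hsInner b T (rankOne (X ω) (X ω)) • rankOne (X ω) (X ω) ∂μ) =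
      ∑ q : Fin r × Fin r, ∑ p : Fin r × Fin r,
        ((Real.sqrt (lam q.1) * Real.sqrt (lam q.2) * Real.sqrt (lam p.1) * Real.sqrt (lam p.2)
          * hsInner b T (rankOne (η q.1) (η q.2))) *
          ((if q.1 = q.2 then (1:ℝ) else 0) * (if p.1 = p.2 then 1 else 0)
            + (if q.1 = p.1 then 1 else 0) * (if q.2 = p.2 then 1 else 0)
            + (if q.1 = p.2 then 1 else 0) * (if q.2 = p.1 then 1 else 0))) •
          rankOne (η p.1) (η p.2) := by
    rw [show (fun ω => hsInner b T (rankOne (X ω) (X ω)) • rankOne (X ω) (X ω)) =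
      fun ω => ∑ q : Fin r × Fin r, ∑ p : Fin r × Fin r,
        ((Real.sqrt (lam q.1) * Real.sqrt (lam q.2) * Real.sqrt (lam p.1) * Real.sqrt (lam p.2)
          * hsInner b T (rankOne (η q.1) (η q.2))) *
          (P q.1 ω * P q.2 ω * P p.1 ω * P p.2 ω)) • rankOne (η p.1) (η p.2) from
      funext integrand_eq]
    rw [integral_finset_sum _ (fun q _ => integrable_finset_sum _ (fun p _ => hint q p))]
    refine Finset.sum_congr rfl fun q _ => ?_
    rw [integral_finset_sum _ (fun p _ => hint q p)]
    refine Finset.sum_congr rfl fun p _ => ?_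
    rw [integral_smul_const, MeasureTheory.integral_const_mul,
      (E4 hmeas hindep hgauss q.1 q.2 p.1 p.2).2]
  have hK : hsInner b T (∑ j, lam j • rankOne (η j) (η j)) =
      ∑ j, lam j * hsInner b T (rankOne (η j) (η j)) :=
    hsInner_sum b T Finset.univ lam η η
  have hKfull : hsInner b T (∑ j, lam j • rankOne (η j) (η j)) •
      (∑ j, lam j • rankOne (η j) (η j)) =
      ∑ j, ∑ k, ((lam j * lam k) * hsInner b T (rankOne (η j) (η j))) • rankOne (η k) (η k) := by
    rw [hK, Finset.sum_smul]
    refine Finset.sum_congr rfl fun j _ => ?_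
    rw [Finset.smul_sum]
    refine Finset.sum_congr rfl fun k _ => ?_
    rw [smul_smul]
    congr 1
    ring
  rw [hI, hKfull]
  rw [show (∑ q : Fin r × Fin r, ∑ p : Fin r × Fin r,
        ((Real.sqrt (lam q.1) * Real.sqrt (lam q.2) * Real.sqrt (lam p.1) * Real.sqrt (lam p.2)
          * hsInner b T (rankOne (η q.1) (η q.2))) *
          ((if q.1 = q.2 then (1:ℝ) else 0) * (if p.1 = p.2 then 1 else 0)
            + (if q.1 = p.1 then 1 else 0) * (if q.2 = p.2 then 1 else 0)
            + (if q.1 = p.2 then 1 else 0) * (if q.2 = p.1 then 1 else 0))) •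
          rankOne (η p.1) (η p.2)) =
      ∑ q1, ∑ q2, ∑ p1, ∑ p2,
        ((Real.sqrt (lam q1) * Real.sqrt (lam q2) * Real.sqrt (lam p1) * Real.sqrt (lam p2)
          * hsInner b T (rankOne (η q1) (η q2))) *
          ((if q1 = q2 then (1:ℝ) else 0) * (if p1 = p2 then 1 else 0)
            + (if q1 = p1 then 1 else 0) * (if q2 = p2 then 1 else 0)
            + (if q1 = p2 then 1 else 0) * (if q2 = p1 then 1 else 0))) •
          rankOne (η p1) (η p2) from by
    rw [Fintype.sum_prod_type]
    exact Finset.sum_congr rfl fun q1 _ => Finset.sum_congr rfl fun q2 _ =>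
      Fintype.sum_prod_type (f := fun p : Fin r × Fin r =>
        ((Real.sqrt (lam q1) * Real.sqrt (lam q2) * Real.sqrt (lam p.1) * Real.sqrt (lam p.2)
          * hsInner b T (rankOne (η q1) (η q2))) *
          ((if q1 = q2 then (1:ℝ) else 0) * (if p.1 = p.2 then 1 else 0)
            + (if q1 = p.1 then 1 else 0) * (if q2 = p.2 then 1 else 0)
            + (if q1 = p.2 then 1 else 0) * (if q2 = p.1 then 1 else 0))) •
          rankOne (η p.1) (η p.2))]
  exact final_algebra lam (fun j => (hlam j).le)
    (fun j k => hsInner b T (rankOne (η j) (η k))) (fun j k => rankOne (η j) (η k))
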